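/- For all λ > 0, α > 0 and τ ≥ 1, ∫₀^∞ 2λπ r e^{−λπr²} ( ∫_{τ^{1/α} r}^∞ 2λπ h e^{−λπ(h²−r²)} dh ) dr = τ^{−2/α}. That is, in the interference-limited regime without fading, the probability that the signal-to-tropical-interference ratio at a typical time exceeds τ, i.e. P(R₁ > τ^{1/α} R), equals τ^{−2/α}; in particular it does not depend on λ. -/

import Mathlib

/-!
Given the nearest distance `R = r`, the tail of the second-nearest distance is
`P(R₁ > c r) = e^{-λπ(c² - 1) r²}`. Multiplying by the Rayleigh density of `R` leaves a Rayleigh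
density with parameter `λπc²`, up to the factor `c⁻²`, so the coverage probability is `c⁻²`
with `c = τ^{1/α}`; the intensity cancels.
-/

open MeasureTheory Set Real

lemma integral_Ioi_mul_exp_neg_mul_sq {b : ℝ} (hb : 0 < b) (a : ℝ) :
    ∫ x in Ioi a, x * exp (-(b * x ^ 2)) = exp (-(b * a ^ 2)) / (2 * b) := by
  have hderiv : ∀ x ∈ Ici a,
      HasDerivAt (fun x : ℝ => -exp (-(b * x ^ 2)) / (2 * b)) (x * exp (-(b * x ^ 2))) x := by
    intro x _
    have hexponent : HasDerivAt (fun x : ℝ => -(b * x ^ 2)) (-(b * (2 * x))) x := by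
      simpa [Pi.neg_def] using ((hasDerivAt_pow 2 x).const_mul b).neg
    refine (hexponent.exp.neg.div_const (2 * b)).congr_deriv ?_
    field_simp
  have hint : IntegrableOn (fun x : ℝ => x * exp (-(b * x ^ 2))) (Ioi a) := by
    simpa [neg_mul] using (integrable_mul_exp_neg_mul_sq hb).integrableOn (s := Ioi a)
  have hlim : Filter.Tendsto (fun x : ℝ => -exp (-(b * x ^ 2)) / (2 * b))
      Filter.atTop (nhds 0) := by
    have hexponent : Filter.Tendsto (fun x : ℝ => -(b * x ^ 2)) Filter.atTop Filter.atBot :=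
      Filter.tendsto_neg_atBot_iff.mpr
        ((Filter.tendsto_pow_atTop two_ne_zero).const_mul_atTop hb)
    simpa using (tendsto_exp_atBot.comp hexponent).neg.div_const (2 * b)
  rw [integral_Ioi_of_hasDerivAt_of_tendsto' hderiv hint hlim]
  ring

lemma integral_Ioi_two_mul_mul_exp_neg_mul_sq_sub_sq {b : ℝ} (hb : 0 < b) (a r : ℝ) :
    ∫ h in Ioi a, 2 * b * h * exp (-(b * (h ^ 2 - r ^ 2))) = exp (-(b * (a ^ 2 - r ^ 2))) := by
  have hsplit : ∀ h : ℝ, 2 * b * h * exp (-(b * (h ^ 2 - r ^ 2))) =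
      2 * b * exp (b * r ^ 2) * (h * exp (-(b * h ^ 2))) := by
    intro h
    rw [show -(b * (h ^ 2 - r ^ 2)) = b * r ^ 2 + -(b * h ^ 2) by ring, exp_add]
    ring
  simp only [hsplit, integral_const_mul, integral_Ioi_mul_exp_neg_mul_sq hb]
  rw [show -(b * (a ^ 2 - r ^ 2)) = b * r ^ 2 + -(b * a ^ 2) by ring, exp_add]
  field_simp

lemma integral_Ioi_rayleigh_mul_tail {b c : ℝ} (hb : 0 < b) (hc : c ≠ 0) :
    ∫ r in Ioi (0 : ℝ), 2 * b * r * exp (-(b * r ^ 2)) *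
        ∫ h in Ioi (c * r), 2 * b * h * exp (-(b * (h ^ 2 - r ^ 2))) = (c ^ 2)⁻¹ := by
  have hbc : 0 < b * c ^ 2 := by positivity
  have hintegrand : ∀ r : ℝ, 2 * b * r * exp (-(b * r ^ 2)) *
      ∫ h in Ioi (c * r), 2 * b * h * exp (-(b * (h ^ 2 - r ^ 2))) =
        2 * b * (r * exp (-(b * c ^ 2 * r ^ 2))) := by
    intro r
    rw [integral_Ioi_two_mul_mul_exp_neg_mul_sq_sub_sq hb, mul_assoc, ← exp_add]
    ring_nf
  simp only [hintegrand, integral_const_mul, integral_Ioi_mul_exp_neg_mul_sq hbc,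
    zero_pow two_ne_zero, mul_zero, neg_zero, exp_zero]
  field_simp

theorem stmt_19 (lam α τ : ℝ) (hlam : 0 < lam) (hτ : 1 ≤ τ) :
    (∫ r in Ioi (0:ℝ), 2 * lam * Real.pi * r * Real.exp (-(lam * Real.pi * r ^ 2)) *
        ∫ h in Ioi (τ ^ (1/α) * r),
          2 * lam * Real.pi * h * Real.exp (-(lam * Real.pi * (h ^ 2 - r ^ 2)))) =
      τ ^ (-2 / α) := by
  have hτ0 : 0 < τ := zero_lt_one.trans_le hτ
  have hsq : (τ ^ (1 / α)) ^ 2 = τ ^ (2 / α) := by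
    rw [← rpow_natCast, ← rpow_mul hτ0.le]
    ring_nf
  have hcoverage := integral_Ioi_rayleigh_mul_tail (mul_pos hlam pi_pos)
    (rpow_pos_of_pos hτ0 (1 / α)).ne'
  rw [hsq, ← rpow_neg hτ0.le, ← neg_div] at hcoverage
  simpa only [mul_assoc] using hcoverage
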